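/- Let M be a free W(k)-module of finite rank h with additive operators F (σ-semilinear) and V (σ⁻¹-semilinear) satisfying FV = VF = p. Then dim_k(M/FM) + dim_k(M/VM) = h. -/

import Mathlib

open WittVector

section Aux
variable {p : ℕ} [hp : Fact p.Prime] {k : Type*} [Field k] [CharP k p] [PerfectRing k p]

omit [CharP k p] [PerfectRing k p] in
lemma ghost0_eq_coeff (a : WittVector p k) : ghostComponent 0 a = a.coeff 0 := by
  rw [ghostComponent_apply, wittPolynomial_zero, MvPolynomial.aeval_X]

omit [CharP k p] [PerfectRing k p] in
lemma ghost0_teich (c : k) : ghostComponent 0 (teichmuller p c) = c := by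
  rw [ghost0_eq_coeff, teichmuller_coeff_zero]

lemma exists_p_mul (a : WittVector p k) (ha : ghostComponent 0 a = 0) :
    ∃ b : WittVector p k, a = (p : WittVector p k) * b := by
  rw [ghost0_eq_coeff] at ha
  set c : WittVector p k := WittVector.mk p (fun n => a.coeff (n+1)) with hc
  have hva : verschiebung c = a := by
    ext n
    cases n with
    | zero => rw [verschiebung_coeff_zero, ha]
    | succ n => rw [verschiebung_coeff_succ]; rfl
  refine ⟨(frobeniusEquiv p k).symm c, ?_⟩
  have h2 := verschiebung_frobenius ((frobeniusEquiv p k).symm c)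
  have h3 : frobenius ((frobeniusEquiv p k).symm c) = c := (frobeniusEquiv p k).apply_symm_apply c
  rw [h3] at h2
  rw [← hva, h2, mul_comm]

omit [PerfectRing k p] in
lemma frobenius_teich (c : k) : frobenius (teichmuller p c) = teichmuller p (c ^ p) := by
  ext n
  rw [coeff_frobenius_charP]
  cases n with
  | zero => rw [teichmuller_coeff_zero, teichmuller_coeff_zero]
  | succ n =>
      rw [teichmuller_coeff_pos _ _ (n+1) n.succ_pos, teichmuller_coeff_pos _ _ (n+1) n.succ_pos,
        zero_pow hp.out.ne_zero]

lemma frobeniusEquiv_symm_teich (c : k) :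
    (WittVector.frobeniusEquiv p k).symm (teichmuller p c) =
      teichmuller p ((_root_.frobeniusEquiv k p).symm c) := by
  apply (WittVector.frobeniusEquiv p k).injective
  rw [RingEquiv.apply_symm_apply, WittVector.frobeniusEquiv_apply, frobenius_teich]
  congr 1
  rw [← frobenius_def, ← _root_.frobeniusEquiv_apply, RingEquiv.apply_symm_apply]

variable {N : Type*} [AddCommGroup N] [Module (WittVector p k) N]

/-- Any `p`-torsion `W(k)`-module is canonically a `k`-vector space, with `c` acting
as the Teichmüller lift of `c`. -/
noncomputable def kModule (hN : ∀ x : N, (p : WittVector p k) • x = 0) : Module k N where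
  smul c x := teichmuller p c • x
  one_smul x := by
    show teichmuller p (1 : k) • x = x
    rw [map_one, one_smul]
  mul_smul c d x := by
    show teichmuller p (c * d) • x = teichmuller p c • teichmuller p d • x
    rw [map_mul, mul_smul]
  smul_add c x y := smul_add (teichmuller p c) x y
  smul_zero c := smul_zero (teichmuller p c)
  add_smul c d x := by
    show teichmuller p (c + d) • x = teichmuller p c • x + teichmuller p d • x
    obtain ⟨b, hb⟩ := exists_p_mul
      (teichmuller p (c + d) - teichmuller p c - teichmuller p d)
      (by simp [map_sub, ghost0_teich])
    have h0 : (teichmuller p (c + d) - teichmuller p c - teichmuller p d) • x = 0 := by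
      rw [hb, mul_smul]
      exact hN _
    rw [sub_smul, sub_smul, sub_sub, sub_eq_zero] at h0
    rw [h0]
  zero_smul x := by
    show teichmuller p (0 : k) • x = 0
    rw [teichmuller_zero, zero_smul]

lemma kModule_compat (hN : ∀ x : N, (p : WittVector p k) • x = 0)
    (a : WittVector p k) (x : N) :
    a • x = teichmuller p (ghostComponent 0 a) • x := by
  obtain ⟨b, hb⟩ := exists_p_mul (a - teichmuller p (ghostComponent 0 a))
    (by simp [map_sub, ghost0_teich])
  have h0 : (a - teichmuller p (ghostComponent 0 a)) • x = 0 := by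
    rw [hb, mul_smul]
    exact hN _
  rwa [sub_smul, sub_eq_zero] at h0

end Aux
/-- Dieudonné module dimension formula: if `M` is a free `W(k)`-module of finite rank `h`
with a `σ`-semilinear operator `F` and a `σ⁻¹`-semilinear operator `V` (both injective)
satisfying `FV = VF = p`, then `dim_k (M/FM) + dim_k (M/VM) = h`.  Here the `k`-vector
space structures on the quotients are the natural ones, i.e. the `W(k)`-action factors
through the residue map `W(k) → k` (the zeroth ghost/Witt component). -/
theorem dim_quot_frobenius_add_dim_quot_verschiebung
    (p : ℕ) [Fact p.Prime] (k : Type*) [Field k] [CharP k p] [PerfectRing k p]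
    (M : Type*) [AddCommGroup M] [Module (WittVector p k) M]
    [Module.Free (WittVector p k) M] [Module.Finite (WittVector p k) M]
    (h : ℕ) (hrank : Module.finrank (WittVector p k) M = h)
    [RingHomSurjective (WittVector.frobeniusEquiv p k).toRingHom]
    [RingHomSurjective (WittVector.frobeniusEquiv p k).symm.toRingHom]
    (F : M →ₛₗ[(WittVector.frobeniusEquiv p k).toRingHom] M)
    (V : M →ₛₗ[(WittVector.frobeniusEquiv p k).symm.toRingHom] M)
    (hFinj : Function.Injective F) (hVinj : Function.Injective V)
    (hFV : ∀ x : M, F (V x) = p • x) (hVF : ∀ x : M, V (F x) = p • x)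
    [Module k (M ⧸ LinearMap.range F)] [Module k (M ⧸ LinearMap.range V)]
    (hcompatF : ∀ (a : WittVector p k) (y : M ⧸ LinearMap.range F),
      a • y = (WittVector.ghostComponent 0 a) • y)
    (hcompatV : ∀ (a : WittVector p k) (y : M ⧸ LinearMap.range V),
      a • y = (WittVector.ghostComponent 0 a) • y) :
    Module.finrank k (M ⧸ LinearMap.range F) +
      Module.finrank k (M ⧸ LinearMap.range V) = h := by
  classical
  -- the submodule pM of M
  set P : Submodule (WittVector p k) M :=
    LinearMap.range (LinearMap.lsmul (WittVector p k) M (p : WittVector p k)) with hP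
  have memP : ∀ x : M, x ∈ P ↔ ∃ y : M, (p : WittVector p k) • y = x := by
    intro x
    constructor
    · rintro ⟨y, rfl⟩; exact ⟨y, rfl⟩
    · rintro ⟨y, rfl⟩; exact ⟨y, rfl⟩
  have hcast : ∀ y : M, (p : WittVector p k) • y = p • y := fun y =>
    Nat.cast_smul_eq_nsmul _ p y
  have hPv : P ≤ LinearMap.range V := by
    intro x hx
    obtain ⟨y, rfl⟩ := (memP x).mp hx
    exact ⟨F y, by rw [hVF, hcast]⟩
  -- everything in M ⧸ P is p-torsion
  have hN : ∀ z : M ⧸ P, (p : WittVector p k) • z = 0 := by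
    intro z
    obtain ⟨x, rfl⟩ := Submodule.Quotient.mk_surjective P z
    rw [← Submodule.Quotient.mk_smul, Submodule.Quotient.mk_eq_zero]
    exact (memP _).mpr ⟨x, rfl⟩
  letI instQP : Module k (M ⧸ P) := kModule hN
  have ksmul_def : ∀ (c : k) (z : M ⧸ P), c • z = teichmuller p c • z := fun c z => rfl
  -- a basis of M ⧸ P over k
  let b : Module.Basis (Fin h) (WittVector p k) M := Module.finBasisOfFinrankEq (WittVector p k) M hrank
  let v : Fin h → (M ⧸ P) := fun i => Submodule.Quotient.mk (b i)
  have hspan : ⊤ ≤ Submodule.span k (Set.range v) := by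
    intro z _
    obtain ⟨x, rfl⟩ := Submodule.Quotient.mk_surjective P z
    have hx : x = ∑ i, b.repr x i • b i := (Module.Basis.sum_repr b x).symm
    rw [hx, ← Submodule.mkQ_apply, map_sum]
    apply Submodule.sum_mem
    intro i _
    rw [Submodule.mkQ_apply, Submodule.Quotient.mk_smul, kModule_compat hN, ← ksmul_def]
    exact Submodule.smul_mem _ _ (Submodule.subset_span ⟨i, rfl⟩)
  have hli : LinearIndependent k v := by
    rw [Fintype.linearIndependent_iff]
    intro g hg i
    have h1 : (Submodule.Quotient.mk (∑ j, teichmuller p (g j) • b j) : M ⧸ P) = 0 := by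
      rw [← Submodule.mkQ_apply, map_sum, ← hg]
      refine Finset.sum_congr rfl fun j _ => ?_
      rw [Submodule.mkQ_apply, Submodule.Quotient.mk_smul, ksmul_def]
    rw [Submodule.Quotient.mk_eq_zero] at h1
    obtain ⟨m, hm⟩ := (memP _).mp h1
    have h2 : teichmuller p (g i) = (p : WittVector p k) * b.repr m i := by
      have h3 := congrArg (fun y => b.repr y i) hm
      simp only [map_smul, Finsupp.smul_apply, smul_eq_mul] at h3
      have h4 := congrFun (b.repr_sum_self (fun j => teichmuller p (g j))) i
      rw [h4] at h3
      exact h3.symm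
    have h5 := congrArg (WittVector.ghostComponent 0) h2
    rw [ghost0_teich, map_mul, map_natCast] at h5
    rw [h5, CharP.cast_eq_zero k p, zero_mul]
  let bq : Module.Basis (Fin h) k (M ⧸ P) := Module.Basis.mk hli hspan
  haveI : FiniteDimensional k (M ⧸ P) := Module.Finite.of_basis bq
  have hdim : Module.finrank k (M ⧸ P) = h := by
    rw [Module.finrank_eq_card_basis bq, Fintype.card_fin]
  -- the projection M ⧸ P → M ⧸ VM, as a k-linear map
  let π0 : (M ⧸ P) →ₗ[WittVector p k] (M ⧸ LinearMap.range V) :=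
    Submodule.mapQ P (LinearMap.range V) LinearMap.id (fun x hx => hPv hx)
  have π0_mk : ∀ x : M, π0 (Submodule.Quotient.mk x) = Submodule.Quotient.mk x := fun x =>
    Submodule.mapQ_apply _ _ _ _
  let π : (M ⧸ P) →ₗ[k] (M ⧸ LinearMap.range V) :=
    { toFun := π0
      map_add' := map_add π0
      map_smul' := by
        intro c z
        obtain ⟨x, rfl⟩ := Submodule.Quotient.mk_surjective P z
        show π0 (c • Submodule.Quotient.mk x) =
          RingHom.id k c • π0 (Submodule.Quotient.mk x)
        rw [RingHom.id_apply, ksmul_def, ← Submodule.Quotient.mk_smul, π0_mk, π0_mk,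
          Submodule.Quotient.mk_smul, hcompatV, ghost0_teich] }
  have π_mk : ∀ x : M, π (Submodule.Quotient.mk x) = Submodule.Quotient.mk x := π0_mk
  have hπsurj : Function.Surjective π := by
    intro z
    obtain ⟨x, rfl⟩ := Submodule.Quotient.mk_surjective _ z
    exact ⟨Submodule.Quotient.mk x, π_mk x⟩
  -- V descends to an injective map M ⧸ FM → M ⧸ P with image ker π
  have hVle : LinearMap.range F ≤ Submodule.comap V P := by
    rintro x hx
    obtain ⟨y, rfl⟩ := hx
    show V (F y) ∈ P
    rw [hVF]
    exact (memP _).mpr ⟨y, hcast y⟩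
  let Vb : (M ⧸ LinearMap.range F) →ₛₗ[(WittVector.frobeniusEquiv p k).symm.toRingHom]
      (M ⧸ P) := Submodule.mapQ _ _ V hVle
  have Vb_mk : ∀ x : M, Vb (Submodule.Quotient.mk x) = Submodule.Quotient.mk (V x) := fun x =>
    Submodule.mapQ_apply _ _ _ _
  have hVbmem : ∀ y, Vb y ∈ LinearMap.ker π := by
    intro y
    obtain ⟨x, rfl⟩ := Submodule.Quotient.mk_surjective _ y
    rw [LinearMap.mem_ker, Vb_mk, π_mk, Submodule.Quotient.mk_eq_zero]
    exact ⟨x, rfl⟩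
  have hVbinj : Function.Injective Vb := by
    intro y y' hyy
    obtain ⟨x, rfl⟩ := Submodule.Quotient.mk_surjective _ y
    obtain ⟨x', rfl⟩ := Submodule.Quotient.mk_surjective _ y'
    rw [Vb_mk, Vb_mk, Submodule.Quotient.eq] at hyy
    obtain ⟨m, hm⟩ := (memP _).mp hyy
    rw [hcast, ← hVF, ← map_sub] at hm
    have hxx : F m = x - x' := hVinj hm
    rw [Submodule.Quotient.eq]
    exact ⟨m, hxx⟩
  let g : (M ⧸ LinearMap.range F) →+ ↥(LinearMap.ker π) :=
    { toFun := fun y => ⟨Vb y, hVbmem y⟩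
      map_zero' := Subtype.ext (map_zero Vb)
      map_add' := fun a b₂ => Subtype.ext (map_add Vb a b₂) }
  have hgbij : Function.Bijective g := by
    constructor
    · intro a b₂ hab
      exact hVbinj (congrArg Subtype.val hab)
    · rintro ⟨z, hz⟩
      obtain ⟨x, rfl⟩ := Submodule.Quotient.mk_surjective P z
      rw [LinearMap.mem_ker, π_mk, Submodule.Quotient.mk_eq_zero] at hz
      obtain ⟨m, rfl⟩ := hz
      exact ⟨Submodule.Quotient.mk m, Subtype.ext (Vb_mk m)⟩
  let e : (M ⧸ LinearMap.range F) ≃+ ↥(LinearMap.ker π) := AddEquiv.ofBijective g hgbij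
  have hcomp : ∀ (c : k) (y : M ⧸ LinearMap.range F),
      e (c • y) = (_root_.frobeniusEquiv k p).symm c • e y := by
    intro c y
    obtain ⟨x, rfl⟩ := Submodule.Quotient.mk_surjective _ y
    apply Subtype.ext
    have e1 : c • (Submodule.Quotient.mk x : M ⧸ LinearMap.range F) =
        Submodule.Quotient.mk (teichmuller p c • x) := by
      conv_lhs => rw [← ghost0_teich (p := p) c]
      rw [← hcompatF, ← Submodule.Quotient.mk_smul]
    show Vb (c • Submodule.Quotient.mk x) =
      (_root_.frobeniusEquiv k p).symm c • Vb (Submodule.Quotient.mk x)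
    rw [e1, Vb_mk, Vb_mk, ksmul_def, V.map_smulₛₗ,
      show ((WittVector.frobeniusEquiv p k).symm.toRingHom (teichmuller p c))
          = teichmuller p ((_root_.frobeniusEquiv k p).symm c) from frobeniusEquiv_symm_teich c,
      Submodule.Quotient.mk_smul]
  have hker : Module.finrank k (M ⧸ LinearMap.range F)
      = Module.finrank k ↥(LinearMap.ker π) := by
    have hr := rank_eq_of_equiv_equiv (R := k) (R' := k)
      (M := M ⧸ LinearMap.range F) (M₁ := ↥(LinearMap.ker π))
      (fun c => (_root_.frobeniusEquiv k p).symm c) e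
      (_root_.frobeniusEquiv k p).symm.bijective hcomp
    simp only [Module.finrank]
    rw [hr]
  have hrn := LinearMap.finrank_range_add_finrank_ker π
  rw [LinearMap.range_eq_top.mpr hπsurj, finrank_top, hdim] at hrn
  rw [hker]
  omega
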